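/- Let $\mathbf{u}$ be an infinite word over a finite alphabet with $r$ letters, and let $\sigma$ be a morphism of constant length $\ell \ge 2$ on this alphabet such that $\sigma(\mathbf{u}) = \mathbf{u}$ (i.e., $\mathbf{u}$ is a fixed point of $\sigma$). If $\mathbf{u}$ is not eventually periodic, then $\mathbf{u}$ satisfies Condition $(*)_{1+1/r}$: there exist sequences of finite words $(U_n)$, $(V_n)$ with $U_n V_n^{1+1/r}$ a prefix of $\mathbf{u}$, $|U_n|/|V_n| \le r-1$, and $|V_n| \to \infty$. -/

import Mathlib

open scoped BigOperators

/-- `L` is a prefix of the infinite word `a` (0-indexed). -/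
def IsPrefixSeq {A : Type*} (a : ℕ → A) (L : List A) : Prop :=
  ∀ i, i < L.length → L.getD i (a 0) = a i

/-- The word `V^w` for a real exponent `w`. -/
noncomputable def wPow {A : Type*} (V : List A) (w : ℝ) : List A :=
  (List.replicate ⌊w⌋₊ V).flatten ++ V.take ⌈(w - (⌊w⌋₊ : ℝ)) * (V.length : ℝ)⌉₊

/-- The sequence `a` is eventually periodic. -/
def EvPeriodic {A : Type*} (a : ℕ → A) : Prop :=
  ∃ r s : ℕ, 0 < s ∧ ∀ k, r ≤ k → a (k + s) = a k

/-- Condition `(*)_w` of Adamczewski–Bugeaud. -/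
noncomputable def ConditionStar {A : Type*} (a : ℕ → A) (w : ℝ) : Prop :=
  ¬ EvPeriodic a ∧
  ∃ U V : ℕ → List A,
    (∀ n, IsPrefixSeq a (U n ++ wPow (V n) w)) ∧
    (∃ C : ℝ, ∀ n, ((U n).length : ℝ) ≤ C * ((V n).length : ℝ)) ∧
    (∀ n, 0 < (V n).length) ∧
    StrictMono fun n => (V n).length

/-- The subword complexity function: number of distinct factors of length `n`. -/
noncomputable def complexity {A : Type*} (a : ℕ → A) (n : ℕ) : ℕ :=
  Set.ncard {L : List A | ∃ i : ℕ, L = (List.range n).map fun j => a (i + j)}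

/-- The action of a morphism (substitution) on finite words. -/
def mapWord {A B : Type*} (φ : A → List B) (L : List A) : List B := L.flatMap φ

/-- `φ` is prolongable on the letter `a0`. -/
def Prolongable {A : Type*} (φ : A → List A) (a0 : A) : Prop :=
  ∃ W : List A, W ≠ [] ∧ φ a0 = a0 :: W ∧ ∀ k : ℕ, (mapWord φ)^[k] W ≠ []

/-!
Among the first `r + 1` letters of `u` some letter `a` occurs twice, so `u` begins with
`U a V a` where `|U| + |a V| ≤ r`. Applying `σⁿ` to this prefix of the fixed point gives the
prefix `σⁿ(U) σⁿ(a V) σⁿ(a)`. Since `σ` has constant length, `σⁿ(a)` is the prefix of length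
`ℓⁿ ≥ |σⁿ(a V)| / r` of `Vₙ = σⁿ(a V)`, so `Uₙ = σⁿ(U)` and `Vₙ` witness the exponent
`1 + 1/r`, with `|Uₙ| / |Vₙ| = |U| / |a V| ≤ r - 1` and `|Vₙ| ≥ ℓⁿ → ∞`. A non-periodic word
needs `r ≥ 2` letters, so that `⌊1 + 1/r⌋ = 1`.
-/

section Morphism

variable {A : Type*} (σ : A → List A)

lemma mapWord_append {B : Type*} (φ : A → List B) (L M : List A) :
    mapWord φ (L ++ M) = mapWord φ L ++ mapWord φ M :=
  List.flatMap_append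

lemma mapWord_iterate_append (n : ℕ) (L M : List A) :
    (mapWord σ)^[n] (L ++ M) = (mapWord σ)^[n] L ++ (mapWord σ)^[n] M := by
  induction n generalizing L M with
  | zero => rfl
  | succ n ih => simp only [Function.iterate_succ_apply, mapWord_append, ih]

variable {σ} {ℓ : ℕ} (hσ : ∀ a, (σ a).length = ℓ)
include hσ

lemma length_mapWord (L : List A) : (mapWord σ L).length = ℓ * L.length := by
  induction L with
  | nil => rfl
  | cons a L ih =>
    rw [← List.singleton_append, mapWord_append, List.length_append, ih]
    simp [mapWord, hσ, Nat.mul_succ, Nat.add_comm]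

lemma length_mapWord_iterate (n : ℕ) (L : List A) :
    ((mapWord σ)^[n] L).length = ℓ ^ n * L.length := by
  induction n generalizing L with
  | zero => simp
  | succ n ih => rw [Function.iterate_succ_apply, ih, length_mapWord hσ, pow_succ, mul_assoc]

end Morphism

section Prefix

variable {A : Type*} {u : ℕ → A}

lemma IsPrefixSeq.eq_map_range {L : List A} (h : IsPrefixSeq u L) :
    L = (List.range L.length).map u := by
  refine List.ext_getElem (by simp) fun i hi _ => ?_
  have := h i hi
  rw [List.getD_eq_getElem L (u 0) hi] at this
  simpa using this

lemma isPrefixSeq_map_range (u : ℕ → A) (N : ℕ) : IsPrefixSeq u ((List.range N).map u) := by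
  intro i hi
  simp_all

lemma IsPrefixSeq.of_prefix {L M : List A} (h : IsPrefixSeq u M) (hLM : L <+: M) :
    IsPrefixSeq u L := by
  intro i hi
  have hiM := hi.trans_le hLM.length_le
  rw [List.getD_eq_getElem L (u 0) hi, hLM.getElem hi, ← List.getD_eq_getElem M (u 0) hiM]
  exact h i hiM

variable {σ : A → List A} (hfix : ∀ n, IsPrefixSeq u (mapWord σ ((List.range n).map u)))
include hfix

lemma IsPrefixSeq.mapWord_iterate {L : List A} (h : IsPrefixSeq u L) (n : ℕ) :
    IsPrefixSeq u ((mapWord σ)^[n] L) := by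
  induction n generalizing L with
  | zero => exact h
  | succ n ih =>
    rw [Function.iterate_succ_apply]
    exact ih (h.eq_map_range ▸ hfix L.length)

/-- The first `ℓ ^ n` letters of `σⁿ(a :: V)` are `σⁿ(a)`, which is also the image of the
closing `a`. -/
lemma IsPrefixSeq.mapWord_iterate_return {ℓ : ℕ} (hσ : ∀ a, (σ a).length = ℓ)
    {U V : List A} {a : A} (h : IsPrefixSeq u (U ++ a :: V ++ [a])) (n : ℕ) :
    IsPrefixSeq u ((mapWord σ)^[n] U ++ (mapWord σ)^[n] (a :: V) ++
      ((mapWord σ)^[n] (a :: V)).take (ℓ ^ n)) := by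
  have hhead : ((mapWord σ)^[n] (a :: V)).take (ℓ ^ n) = (mapWord σ)^[n] [a] := by
    rw [← List.singleton_append, mapWord_iterate_append,
      List.take_left' (by simp [length_mapWord_iterate hσ])]
  rw [hhead, ← mapWord_iterate_append, ← mapWord_iterate_append]
  exact h.mapWord_iterate hfix n

end Prefix

lemma exists_isPrefixSeq_return {A : Type*} [Fintype A] (u : ℕ → A) :
    ∃ (U V : List A) (a : A),
      IsPrefixSeq u (U ++ a :: V ++ [a]) ∧ U.length + V.length < Fintype.card A := by
  obtain ⟨x, y, hxy, hu⟩ := Fintype.exists_ne_map_eq_of_card_lt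
    (fun z : Fin (Fintype.card A + 1) => u z) (by simp)
  obtain ⟨i, j, hij, hj, huij⟩ : ∃ i j, i < j ∧ j ≤ Fintype.card A ∧ u i = u j := by
    rcases lt_or_gt_of_ne hxy with hlt | hlt
    · exact ⟨x, y, hlt, Nat.lt_succ_iff.mp y.isLt, hu⟩
    · exact ⟨y, x, hlt, Nat.lt_succ_iff.mp x.isLt, hu.symm⟩
  obtain ⟨e, rfl⟩ : ∃ e, j = i + (e + 1) := ⟨j - i - 1, by omega⟩
  refine ⟨(List.range i).map u, (List.range e).map (fun t => u (i + (t + 1))), u i, ?_,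
    by simp only [List.length_map, List.length_range]; omega⟩
  convert isPrefixSeq_map_range u (i + (e + 1) + 1) using 1
  rw [List.range_succ, List.range_add, List.range_succ_eq_map]
  simp [huij, Function.comp_def]

lemma two_le_card_of_not_evPeriodic {A : Type*} [Fintype A] {u : ℕ → A}
    (hnp : ¬ EvPeriodic u) : 2 ≤ Fintype.card A := by
  by_contra! hcard
  have : Subsingleton A := Fintype.card_le_one_iff_subsingleton.mp (by omega)
  exact hnp ⟨0, 1, one_pos, fun _ _ => Subsingleton.elim _ _⟩

lemma wPow_one_add_inv {A : Type*} (V : List A) {r : ℕ} (hr : 2 ≤ r) :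
    wPow V (1 + 1 / (r : ℝ)) = V ++ V.take ⌈(V.length : ℝ) / r⌉₊ := by
  have hinv : 1 / (r : ℝ) < 1 := by
    rw [div_lt_one (by positivity)]
    exact_mod_cast hr
  have hfloor : ⌊1 + 1 / (r : ℝ)⌋₊ = 1 := by
    rw [Nat.floor_eq_iff (by positivity)]
    constructor <;> push_cast <;> linarith [show (0 : ℝ) ≤ 1 / r by positivity]
  rw [wPow, hfloor]
  simp [div_eq_inv_mul]

theorem stmt_5 {A : Type*} [Fintype A] (r : ℕ) (hr : Fintype.card A = r)
    (ℓ : ℕ) (hℓ : 2 ≤ ℓ) (σ : A → List A) (hσ : ∀ a : A, (σ a).length = ℓ)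
    (u : ℕ → A) (hfix : ∀ n : ℕ, IsPrefixSeq u (mapWord σ ((List.range n).map u)))
    (hnp : ¬ EvPeriodic u) :
    ∃ U V : ℕ → List A,
      (∀ n, 0 < (V n).length) ∧
      (∀ n, IsPrefixSeq u (U n ++ wPow (V n) (1 + 1 / (r : ℝ)))) ∧
      (∀ n, ((U n).length : ℝ) ≤ ((r : ℝ) - 1) * ((V n).length : ℝ)) ∧
      Filter.Tendsto (fun n => (V n).length) Filter.atTop Filter.atTop := by
  have hr2 : 2 ≤ r := hr ▸ two_le_card_of_not_evPeriodic hnp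
  obtain ⟨U, V, a, hpre, hlen⟩ := exists_isPrefixSeq_return u
  rw [hr] at hlen
  have hlenU n := length_mapWord_iterate hσ n U
  have hlenV n := length_mapWord_iterate hσ n (a :: V)
  refine ⟨fun n => (mapWord σ)^[n] U, fun n => (mapWord σ)^[n] (a :: V),
    fun n => hlenV n ▸ Nat.mul_pos (by positivity) (Nat.succ_pos _), fun n => ?_, fun n => ?_, ?_⟩
  · have hceil : ⌈(((mapWord σ)^[n] (a :: V)).length : ℝ) / r⌉₊ ≤ ℓ ^ n := by
      rw [Nat.ceil_le, hlenV, div_le_iff₀ (by positivity)]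
      push_cast
      gcongr
      simp only [List.length_cons]
      exact_mod_cast (by omega : V.length + 1 ≤ r)
    refine (hpre.mapWord_iterate_return hfix hσ n).of_prefix ?_
    rw [wPow_one_add_inv _ hr2, ← List.append_assoc]
    exact (List.prefix_append_right_inj _).mpr (List.take_prefix_take_left hceil)
  · rw [hlenU, hlenV]
    have hUr : (U.length : ℝ) + 1 ≤ r := by exact_mod_cast (by omega : U.length + 1 ≤ r)
    have hUV : (U.length : ℝ) ≤ ((r : ℝ) - 1) * (V.length + 1) := by nlinarith
    push_cast
    rw [List.length_cons, Nat.cast_add, Nat.cast_one, mul_left_comm]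
    exact mul_le_mul_of_nonneg_left hUV (by positivity)
  · simp only [hlenV]
    exact Filter.tendsto_atTop_mono (fun n => Nat.le_mul_of_pos_right _ (by simp))
      (tendsto_pow_atTop_atTop_of_one_lt hℓ)
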